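/- If a hypergram (V,H,G) admits an n-qubit Pauli assignment for some n, then |V| ≤ 2^m − 1, where m is the dimension over 𝔽₂ of the null space (kernel) of the context matrix of (V,H,G). -/

import Mathlib

open scoped Classical
open Matrix

noncomputable section

/-- The space of `n`-qubit operators, realized as matrices indexed by
`Fin n → Fin 2` (the `n`-fold tensor-product index). -/
abbrev QMat (n : ℕ) := Matrix (Fin n → Fin 2) (Fin n → Fin 2) ℂ

/-- The four Pauli matrices `I, X, Y, Z`. -/
def pauliMat : Fin 4 → Matrix (Fin 2) (Fin 2) ℂ
  | ⟨0, _⟩ => 1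
  | ⟨1, _⟩ => !![0, 1; 1, 0]
  | ⟨2, _⟩ => !![0, -Complex.I; Complex.I, 0]
  | ⟨3, _⟩ => !![1, 0; 0, -1]

/-- The `n`-fold Kronecker (tensor) product `G₁ ⊗ ⋯ ⊗ Gₙ` of the Pauli matrices
selected by `g : Fin n → Fin 4`, as a matrix indexed by `Fin n → Fin 2`. -/
def nPauli {n : ℕ} (g : Fin n → Fin 4) : QMat n :=
  Matrix.of fun r c => ∏ k, pauliMat (g k) (r k) (c k)

/-- `M` is an `n`-qubit Pauli observable. -/
def IsPauliObs (n : ℕ) (M : QMat n) : Prop := ∃ g : Fin n → Fin 4, M = nPauli g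

/-- `I^⊗n`, the `n`-fold tensor product of the identity. -/
def idN (n : ℕ) : QMat n := nPauli (fun _ => ⟨0, by omega⟩)

/-- Product of `f` over a finite set of naturals, taken in increasing order
(well-defined without commutativity; agrees with the unordered product when the
factors pairwise commute). -/
def natFinsetProd {M : Type*} [Monoid M] (s : Finset ℕ) (f : ℕ → M) : M :=
  ((s.sort (· ≤ ·)).map f).prod

/-- `(V,H,G)` is a hypergram: `V` a nonempty finite vertex set, `H` a set of
nonempty hyperedges covering `V`, `G` a set of 2-element edges on `V` forming a
simple reduced graph, no edge of `G` being contained in a hyperedge of `H`. -/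
def IsHypergram (V : Finset ℕ) (H G : Finset (Finset ℕ)) : Prop :=
  V.Nonempty ∧
  (∀ h ∈ H, h ⊆ V ∧ h.Nonempty) ∧
  (∀ v ∈ V, ∃ h ∈ H, v ∈ h) ∧
  (∀ e ∈ G, e ⊆ V ∧ e.card = 2) ∧
  (∀ v ∈ V, ∃ e ∈ G, v ∈ e) ∧
  (∀ v ∈ V, ∀ w ∈ V,
    (∀ u ∈ V, (({v, u} : Finset ℕ) ∈ G ↔ ({w, u} : Finset ℕ) ∈ G)) → v = w) ∧
  (∀ e ∈ G, ∀ h ∈ H, ¬ e ⊆ h)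

/-- `α` is an `n`-qubit Pauli assignment of the hypergram `(V,H,G)`. -/
def IsPauliAssignment (V : Finset ℕ) (H G : Finset (Finset ℕ)) (n : ℕ)
    (α : ℕ → QMat n) : Prop :=
  (∀ v ∈ V, IsPauliObs n (α v)) ∧
  (∀ v ∈ V, α v ≠ idN n) ∧
  (∀ v₁ ∈ V, ∀ v₂ ∈ V, α v₁ = α v₂ → v₁ = v₂) ∧
  (∀ v₁ ∈ V, ∀ v₂ ∈ V, v₁ ≠ v₂ →
    (α v₁ * α v₂ = -(α v₂ * α v₁) ↔ ({v₁, v₂} : Finset ℕ) ∈ G)) ∧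
  (∀ h ∈ H, natFinsetProd h α = idN n ∨ natFinsetProd h α = -(idN n))

/-- The sign `sgn_α(h) ∈ {−1,1}` of a hyperedge `h`: `∏_{v∈h} α(v) = sgn_α(h)·I^⊗n`. -/
def quantumSgn {n : ℕ} (α : ℕ → QMat n) (h : Finset ℕ) : ℤ :=
  if natFinsetProd h α = idN n then 1 else -1

/-- The sign `sgn_a(h) = ∏_{v∈h} a(v)` of a hyperedge for a classical assignment. -/
def classicalSgn (a : ℕ → ℤ) (h : Finset ℕ) : ℤ := ∏ v ∈ h, a v

/-- The contextuality degree of a Pauli assignment: the minimum over classical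
assignments `a : V → {−1,1}` of the number of hyperedges whose signs differ. -/
def contextualityDegree {n : ℕ} (H : Finset (Finset ℕ)) (α : ℕ → QMat n) : ℕ :=
  sInf { d : ℕ | ∃ a : ℕ → ℤ, (∀ v, a v = 1 ∨ a v = -1) ∧
    d = (H.filter (fun h => quantumSgn α h ≠ classicalSgn a h)).card }

/-- The context (incidence) matrix of a hypergram over 𝔽₂. -/
def contextMatrix (V : Finset ℕ) (H : Finset (Finset ℕ)) :
    Matrix {h // h ∈ H} {v // v ∈ V} (ZMod 2) :=
  Matrix.of fun h v => if v.1 ∈ h.1 then 1 else 0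

/-- The anticommutation (adjacency) matrix of a hypergram over 𝔽₂. -/
def anticommMatrix (V : Finset ℕ) (G : Finset (Finset ℕ)) :
    Matrix {v // v ∈ V} {v // v ∈ V} (ZMod 2) :=
  Matrix.of fun i j => if ({i.1, j.1} : Finset ℕ) ∈ G then 1 else 0

/-- The standard symplectic form on `𝔽₂^{2n}`:
`⟨x,y⟩ = Σ_{k=1}^{n} (x_{2k−1} y_{2k} + x_{2k} y_{2k−1})`. -/
def sympForm (n : ℕ) (x y : Fin (2 * n) → ZMod 2) : ZMod 2 :=
  ∑ k : Fin n,
    (x ⟨2 * k.1, by have := k.2; omega⟩ * y ⟨2 * k.1 + 1, by have := k.2; omega⟩ +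
     x ⟨2 * k.1 + 1, by have := k.2; omega⟩ * y ⟨2 * k.1, by have := k.2; omega⟩)

/-- The single-qubit encoding `ψ(I)=(0,0), ψ(X)=(0,1), ψ(Y)=(1,1), ψ(Z)=(1,0)`. -/
def psi4 : Fin 4 → (ZMod 2) × (ZMod 2)
  | ⟨0, _⟩ => (0, 0)
  | ⟨1, _⟩ => (0, 1)
  | ⟨2, _⟩ => (1, 1)
  | ⟨3, _⟩ => (1, 0)

/-- The encoding `ψ` of an `n`-qubit Pauli observable (given by its tensor
factors `g`) as a vector of `𝔽₂^{2n}`, concatenating the per-factor encodings. -/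
def psiVec {n : ℕ} (g : Fin n → Fin 4) : Fin (2 * n) → ZMod 2 := fun idx =>
  if idx.1 % 2 = 0 then (psi4 (g ⟨idx.1 / 2, by have := idx.2; omega⟩)).1
  else (psi4 (g ⟨idx.1 / 2, by have := idx.2; omega⟩)).2

/-- All pairs of elements of `S` commute. -/
def PairComm {n : ℕ} (S : Finset (QMat n)) : Prop := ∀ a ∈ S, ∀ b ∈ S, a * b = b * a

/-- The (well-defined) product of a finite set of pairwise commuting matrices. -/
def commProd {n : ℕ} (S : Finset (QMat n)) (h : PairComm S) : QMat n :=
  S.noncommProd id (fun a ha b hb _ => h a ha b hb)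

/-- Pairwise commutation is inherited by subsets. -/
def pairCommOfSubset {n : ℕ} {S T : Finset (QMat n)} (hST : S ⊆ T) (h : PairComm T) :
    PairComm S := fun a ha b hb => h a (hST ha) b (hST hb)

/-- `Q` (pairwise commuting) is independent: no nonempty subset has product `±I^⊗n`. -/
def IsIndep {n : ℕ} (Q : Finset (QMat n)) (hQ : PairComm Q) : Prop :=
  ∀ S : Finset (QMat n), ∀ (hS : S ⊆ Q), S.Nonempty →
    commProd S (pairCommOfSubset hS hQ) ≠ idN n ∧
    commProd S (pairCommOfSubset hS hQ) ≠ -(idN n)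

/-- The vertex set `{1, …, 15}`. -/
def V15 : Finset ℕ := Finset.Icc 1 15

/-- The 15 lines of the doily. -/
def doilyLines : Finset (Finset ℕ) :=
  { {1,2,3}, {1,8,9}, {1,10,11}, {2,4,6}, {2,5,7}, {3,12,15}, {3,13,14},
    {4,8,12}, {4,10,14}, {5,8,13}, {5,10,15}, {6,9,15}, {6,11,13},
    {7,9,14}, {7,11,12} }

/-- The 10 lines of the two-spread `H_{2s}`. -/
def twoSpreadLines : Finset (Finset ℕ) :=
  { {1,2,3}, {1,10,11}, {2,4,6}, {3,13,14}, {4,8,12}, {5,8,13}, {5,10,15},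
    {6,9,15}, {7,9,14}, {7,11,12} }

/-- The anticommutation graph `G_d = G_{2s}`: pairs of distinct vertices not on a
common doily line. -/
def doilyG : Finset (Finset ℕ) :=
  (V15.powersetCard 2).filter (fun e => ∀ h ∈ doilyLines, ¬ e ⊆ h)

/-!
Write `α v = nPauli (g v)` and encode each observable by `psiVec (g v) ∈ 𝔽₂^{2n}`. Up to a
scalar, multiplying Pauli observables adds their encodings, and a scalar multiple of a Pauli
observable equals a nonzero multiple of `I^⊗n` only if it is `I^⊗n` itself, since every other
Pauli observable is traceless. So `∏_{v∈h} α v = ±I^⊗n` forces `∑_{v∈h} psiVec (g v) = 0`, and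
every coordinate `j` of the encoding yields a vector `v ↦ psiVec (g v) j` in the kernel `K` of
the context matrix. As `α` is injective and avoids `I^⊗n`, evaluation at the vertices embeds `V`
into the nonzero linear forms on `K`, of which there are `2 ^ dim K - 1`.
-/

theorem Submodule.card_le_card_pow_finrank_sub_one {F ι J : Type*} [Field F] [Fintype F]
    [Fintype ι] (K : Submodule F (ι → F)) (f : ι → J → F) (hf : Function.Injective f)
    (hf0 : ∀ i, f i ≠ 0) (hK : ∀ j, (fun i => f i j) ∈ K) :
    Fintype.card ι ≤ Fintype.card F ^ Module.finrank F K - 1 := by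
  let ev : ι → Module.Dual F K := fun i => (LinearMap.proj i).comp K.subtype
  have hev : ∀ i, (fun j => ev i ⟨_, hK j⟩) = f i := fun _ => rfl
  have hinj : Function.Injective ev := fun i k hik =>
    hf (by rw [← hev i, ← hev k, hik])
  have hzero : 0 ∉ Set.range ev := by
    rintro ⟨i, hi⟩
    exact hf0 i (by rw [← hev i, hi]; rfl)
  have : Finite (Module.Dual F K) := Module.finite_of_finite F
  have := Fintype.ofFinite (Module.Dual F K)
  have hlt := Fintype.card_lt_of_injective_of_notMem ev hinj hzero
  rw [Module.card_eq_pow_finrank (K := F) (V := Module.Dual F K),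
    Subspace.dual_finrank_eq] at hlt
  omega

-- With the labels `I, X, Y, Z = 0, 1, 2, 3`, the product of two Pauli matrices is, up to a
-- phase, the Pauli matrix labelled by the bitwise xor of the labels.
lemma pauliMat_mul (a b : Fin 4) :
    ∃ c : ℂ, pauliMat a * pauliMat b = c • pauliMat (a ^^^ b) := by
  -- Pauli matrices square to `1`, so the phase is the `(0, 0)` entry of `σ_a σ_b σ_{a ^^^ b}`.
  refine ⟨(pauliMat a * pauliMat b * pauliMat (a ^^^ b)) 0 0, ?_⟩
  fin_cases a <;> fin_cases b <;> ext i j <;> fin_cases i <;> fin_cases j <;>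
    simp [pauliMat, Matrix.mul_apply]

lemma trace_pauliMat (a : Fin 4) : (pauliMat a).trace = if a = 0 then 2 else 0 := by
  fin_cases a <;> simp [pauliMat, Matrix.trace, Fin.sum_univ_two]

section nPauli

variable {n : ℕ}

lemma nPauli_zero (n : ℕ) : nPauli (0 : Fin n → Fin 4) = 1 := by
  ext r s
  simp [nPauli, pauliMat, Matrix.one_apply, Finset.prod_ite_zero, funext_iff]

lemma idN_eq_one (n : ℕ) : idN n = 1 := nPauli_zero n

lemma nPauli_mul (g g' : Fin n → Fin 4) :
    ∃ c : ℂ, nPauli g * nPauli g' = c • nPauli (fun k => g k ^^^ g' k) := by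
  choose c hc using pauliMat_mul
  refine ⟨∏ k, c (g k) (g' k), ?_⟩
  ext r s
  simp only [Matrix.mul_apply, nPauli, Matrix.of_apply, Matrix.smul_apply, smul_eq_mul,
    ← Finset.prod_mul_distrib]
  rw [← Fintype.prod_sum fun k j => pauliMat (g k) (r k) j * pauliMat (g' k) j (s k)]
  refine Finset.prod_congr rfl fun k _ => ?_
  rw [← Matrix.mul_apply, hc, Matrix.smul_apply, smul_eq_mul]

lemma trace_nPauli (g : Fin n → Fin 4) :
    (nPauli g).trace = ∏ k, (pauliMat (g k)).trace := by
  simp only [Matrix.trace, Matrix.diag, nPauli, Matrix.of_apply]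
  exact (Fintype.prod_sum fun k i => pauliMat (g k) i i).symm

lemma eq_zero_of_smul_nPauli_eq_smul_one {g : Fin n → Fin 4} {c d : ℂ} (hd : d ≠ 0)
    (h : c • nPauli g = d • (1 : QMat n)) : g = 0 := by
  have htr := congrArg Matrix.trace h
  rw [Matrix.trace_smul, Matrix.trace_smul, Matrix.trace_one, trace_nPauli] at htr
  have hprod : ∏ k, (pauliMat (g k)).trace ≠ 0 := by
    intro h0
    simp [h0, hd] at htr
  funext k
  by_contra hk
  exact hprod (Finset.prod_eq_zero (Finset.mem_univ k)
    (by rw [trace_pauliMat, if_neg (by simpa using hk)]))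

lemma psiVec_xor (g g' : Fin n → Fin 4) :
    psiVec (fun k => g k ^^^ g' k) = psiVec g + psiVec g' := by
  have hpsi : ∀ a b : Fin 4, psi4 (a ^^^ b) = psi4 a + psi4 b := by decide
  funext j
  simp only [psiVec, Pi.add_apply, hpsi]
  split_ifs <;> rfl

@[simp] lemma psiVec_zero : psiVec (0 : Fin n → Fin 4) = 0 := by
  funext j
  simp only [psiVec]
  split_ifs <;> rfl

lemma psiVec_injective : Function.Injective (psiVec (n := n)) := by
  intro g g' h
  have hpsi : Function.Injective psi4 := by decide
  funext k
  apply hpsi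
  have h1 := congrFun h ⟨2 * k, by omega⟩
  have h2 := congrFun h ⟨2 * k + 1, by omega⟩
  have hk : (2 * k.1 + 1) / 2 = k := by omega
  simp [psiVec, hk] at h1 h2
  exact Prod.ext h1 h2

lemma exists_list_prod_map_nPauli (l : List (Fin n → Fin 4)) :
    ∃ (c : ℂ) (g : Fin n → Fin 4),
      (l.map nPauli).prod = c • nPauli g ∧ psiVec g = (l.map psiVec).sum := by
  induction l with
  | nil => exact ⟨1, 0, by simp [nPauli_zero], by simp⟩
  | cons a l ih =>
    obtain ⟨c, g, hprod, hpsi⟩ := ih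
    obtain ⟨c', hc'⟩ := nPauli_mul a g
    refine ⟨c * c', fun k => a k ^^^ g k, ?_, ?_⟩
    · rw [List.map_cons, List.prod_cons, hprod, Matrix.mul_smul, hc', smul_smul]
    · rw [List.map_cons, List.sum_cons, psiVec_xor, hpsi]

lemma list_sum_map_psiVec_eq_zero {l : List (Fin n → Fin 4)} {d : ℂ} (hd : d ≠ 0)
    (h : (l.map nPauli).prod = d • 1) : (l.map psiVec).sum = 0 := by
  obtain ⟨c, g, hprod, hpsi⟩ := exists_list_prod_map_nPauli l
  rw [← hpsi, eq_zero_of_smul_nPauli_eq_smul_one hd (hprod.symm.trans h), psiVec_zero]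

lemma sum_psiVec_eq_zero_of_natFinsetProd {α : ℕ → QMat n} {g : ℕ → Fin n → Fin 4}
    {h : Finset ℕ} (hα : ∀ v ∈ h, α v = nPauli (g v))
    (hh : natFinsetProd h α = idN n ∨ natFinsetProd h α = -idN n) :
    ∑ v ∈ h, psiVec (g v) = 0 := by
  have hprod : natFinsetProd h α = (((h.sort (· ≤ ·)).map g).map nPauli).prod := by
    rw [natFinsetProd, List.map_map]
    exact congrArg List.prod (List.map_congr_left fun v hv => hα v ((Finset.mem_sort _).mp hv))
  have hsum : ∑ v ∈ h, psiVec (g v) = (((h.sort (· ≤ ·)).map g).map psiVec).sum := by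
    rw [List.map_map, ← Finset.sum_map_toList,
      ((Finset.sort_perm_toList h (· ≤ ·)).map _).sum_eq]
    rfl
  rw [hsum]
  rcases hh with hh | hh <;> rw [hprod, idN_eq_one] at hh
  · exact list_sum_map_psiVec_eq_zero one_ne_zero (by rw [hh, one_smul])
  · exact list_sum_map_psiVec_eq_zero (neg_ne_zero.mpr one_ne_zero) (by rw [hh, neg_one_smul])

end nPauli

lemma contextMatrix_mulVec_apply {V : Finset ℕ} {H : Finset (Finset ℕ)} (x : ℕ → ZMod 2)
    (h : {h // h ∈ H}) (hV : h.1 ⊆ V) :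
    (contextMatrix V H *ᵥ fun v => x v) h = ∑ v ∈ h.1, x v := by
  simp only [Matrix.mulVec, dotProduct, contextMatrix, Matrix.of_apply, ite_mul, one_mul,
    zero_mul]
  rw [Finset.sum_coe_sort V (fun v => if v ∈ h.1 then x v else 0), Finset.sum_ite_mem,
    Finset.inter_eq_right.mpr hV]

lemma mem_ker_contextMatrix_of_sum_eq_zero {V : Finset ℕ} {H : Finset (Finset ℕ)}
    (hH : ∀ h ∈ H, h ⊆ V) {x : ℕ → ZMod 2} (hx : ∀ h ∈ H, ∑ v ∈ h, x v = 0) :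
    (fun v : {v // v ∈ V} => x v) ∈ LinearMap.ker (contextMatrix V H).mulVecLin := by
  ext h
  rw [Matrix.mulVecLin_apply, contextMatrix_mulVec_apply x h (hH h h.2), hx h h.2]
  rfl

/-- For an assignable hypergram, `|V| ≤ 2^m − 1` where `m` is the
dimension of the null space of the context matrix over 𝔽₂. -/
theorem assignable_card_le
    (V : Finset ℕ) (H G : Finset (Finset ℕ)) (hgram : IsHypergram V H G)
    (hassign : ∃ n, ∃ α : ℕ → QMat n, IsPauliAssignment V H G n α) :
    V.card ≤
      2 ^ (Module.finrank (ZMod 2) (LinearMap.ker (contextMatrix V H).mulVecLin)) - 1 := by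
  obtain ⟨n, α, hpauli, hne_id, hinj, -, hprod⟩ := hassign
  choose! g hg using hpauli
  have hpsi_inj : Function.Injective fun v : {v // v ∈ V} => psiVec (g v) := fun v w hvw =>
    Subtype.ext (hinj v v.2 w w.2 (by rw [hg v v.2, hg w w.2, psiVec_injective hvw]))
  have hpsi_ne : ∀ v : {v // v ∈ V}, psiVec (g v) ≠ 0 := fun v hv =>
    hne_id v v.2 (by
      rw [hg v v.2, psiVec_injective (hv.trans psiVec_zero.symm), idN_eq_one, nPauli_zero])
  have hV : ∀ h ∈ H, h ⊆ V := fun h hh => (hgram.2.1 h hh).1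
  have hmem : ∀ j, (fun v : {v // v ∈ V} => psiVec (g v) j) ∈
      LinearMap.ker (contextMatrix V H).mulVecLin := fun j =>
    mem_ker_contextMatrix_of_sum_eq_zero (x := fun v => psiVec (g v) j) hV fun h hh => by
      rw [← Finset.sum_apply, sum_psiVec_eq_zero_of_natFinsetProd
        (fun v hv => hg v (hV h hh hv)) (hprod h hh), Pi.zero_apply]
  simpa using Submodule.card_le_card_pow_finrank_sub_one _ _ hpsi_inj hpsi_ne hmem
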